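/- arXiv:2507.12613 — 6 statements merged into one kernel-verified Lean document; each statement's English description precedes it below -/
import Mathlib

section
/- The triangles of the infinite fan graph F∞ are exactly the sets {none, some i, some (i+1)} for i ∈ ℤ; in particular, every triangle of F∞ contains the centre `none`. -/
/-- Adjacency relation of the infinite fan graph on `Option ℤ`. -/
def fanAdj : Option ℤ → Option ℤ → Prop
  | some i, some j => |i - j| = 1
  | some _, none => True
  | none, some _ => True
  | none, none => False

/-- The infinite fan graph `F∞`: the centre `none` is adjacent to every `some i`,
and `some i` is adjacent to `some j` iff `|i - j| = 1`. -/
def fanGraph : SimpleGraph (Option ℤ) where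
  Adj := fanAdj
  symm := by
    refine ⟨?_⟩
    rintro (_ | i) (_ | j) h
    · exact h.elim
    · trivial
    · trivial
    · show |j - i| = 1
      rw [abs_sub_comm]
      exact h
  loopless := by
    refine ⟨?_⟩
    rintro (_ | i) h
    · exact h.elim
    · have : |i - i| = 1 := h
      simp at this

lemma Int.abs_sub_eq_one_iff {i j : ℤ} : |i - j| = 1 ↔ j = i + 1 ∨ i = j + 1 := by
  rw [abs_eq zero_le_one]
  omega

/-- Parity: `i - k = (i - j) + (j - k)` is even when both summands are `±1`. -/
lemma Int.abs_sub_ne_one_of_abs_sub_eq_one {i j k : ℤ} (hij : |i - j| = 1) (hjk : |j - k| = 1) :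
    |i - k| ≠ 1 := by
  rw [Int.abs_sub_eq_one_iff] at hij hjk
  rw [Ne, Int.abs_sub_eq_one_iff]
  omega

namespace fanGraph

lemma not_adj_none_none : ¬ fanGraph.Adj none none := id

lemma adj_none_some (i : ℤ) : fanGraph.Adj none (some i) := trivial

lemma adj_some_some {i j : ℤ} : fanGraph.Adj (some i) (some j) ↔ |i - j| = 1 := Iff.rfl

lemma exists_triple_eq_of_adj {i j : ℤ} (h : fanGraph.Adj (some i) (some j)) :
    ∃ k : ℤ, ({none, some i, some j} : Finset (Option ℤ)) = {none, some k, some (k + 1)} := by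
  obtain rfl | rfl := Int.abs_sub_eq_one_iff.1 (adj_some_some.1 h)
  · exact ⟨i, rfl⟩
  · exact ⟨j, by rw [Finset.pair_comm]⟩

theorem isNClique_three_iff {s : Finset (Option ℤ)} :
    fanGraph.IsNClique 3 s ↔ ∃ i : ℤ, s = {none, some i, some (i + 1)} := by
  rw [SimpleGraph.is3Clique_iff]
  constructor
  · rintro ⟨a, b, c, hab, hac, hbc, rfl⟩
    rcases a with _ | i <;> rcases b with _ | j <;> rcases c with _ | k
    · exact absurd hab not_adj_none_none
    · exact absurd hab not_adj_none_none
    · exact absurd hac not_adj_none_none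
    · exact exists_triple_eq_of_adj hbc
    · exact absurd hbc not_adj_none_none
    · rw [Finset.insert_comm]
      exact exists_triple_eq_of_adj hac
    · rw [Finset.pair_comm (some j) none, Finset.insert_comm]
      exact exists_triple_eq_of_adj hab
    · exact absurd hac (Int.abs_sub_ne_one_of_abs_sub_eq_one hab hbc)
  · rintro ⟨i, rfl⟩
    exact ⟨none, some i, some (i + 1), adj_none_some i, adj_none_some (i + 1),
      adj_some_some.2 (by simp), rfl⟩

end fanGraph

/-- The triangles of the infinite fan graph `F∞` are exactly the sets
`{none, some i, some (i+1)}` for `i : ℤ`; in particular, every triangle of `F∞`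
contains the centre `none`. -/
theorem fanGraph_triangles_classification :
    (∀ s : Finset (Option ℤ),
      fanGraph.IsNClique 3 s ↔ ∃ i : ℤ, s = {none, some i, some (i + 1)}) ∧
    ∀ s : Finset (Option ℤ), fanGraph.IsNClique 3 s → none ∈ s := by
  refine ⟨fun s ↦ fanGraph.isNClique_three_iff, fun s hs ↦ ?_⟩
  obtain ⟨i, rfl⟩ := fanGraph.isNClique_three_iff.1 hs
  exact Finset.mem_insert_self _ _
end

section
/- The Farey graph 𝔽 is a connected graph. -/
/-- Adjacency relation of the Farey graph on `Option ℚ`: `some x` and `some y` are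
adjacent iff `|x.num * y.den - y.num * x.den| = 1`, and `none` (representing `∞`)
is adjacent to `some x` iff `x.den = 1`. -/
def fareyAdj : Option ℚ → Option ℚ → Prop
  | some x, some y => |x.num * (y.den : ℤ) - y.num * (x.den : ℤ)| = 1
  | some x, none => x.den = 1
  | none, some x => x.den = 1
  | none, none => False

/-- The Farey graph `𝔽` on the vertex set `Option ℚ`. -/
def fareyGraph : SimpleGraph (Option ℚ) where
  Adj := fareyAdj
  symm := by
    constructor
    rintro (_ | x) (_ | y) h
    · exact h.elim
    · exact h
    · exact h
    · show |y.num * (x.den : ℤ) - x.num * (y.den : ℤ)| = 1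
      rw [abs_sub_comm]
      exact h
  loopless := by
    constructor
    rintro (_ | x) h
    · exact h.elim
    · have : |x.num * (x.den : ℤ) - x.num * (x.den : ℤ)| = 1 := h
      simp at this

/-!
Every rational `p / q` with `q > 1` is adjacent in `𝔽` to a rational of smaller denominator:
by Bézout there are `r, s` with `p * s - r * q = 1`, and `s` can be reduced modulo `q` to lie in
`(0, q)`. Descending on the denominator therefore joins every vertex to an integer, and
every integer is adjacent to `∞`.
-/

open SimpleGraph

theorem Int.exists_mul_sub_mul_eq_one_of_isCoprime {p q : ℤ} (h : IsCoprime p q) (hq : 1 < q) :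
    ∃ r s : ℤ, 0 < s ∧ s < q ∧ p * s - r * q = 1 := by
  obtain ⟨a, b, hab⟩ := h
  have hbezout : p * (a % q) - (-(p * (a / q)) - b) * q = 1 := by
    rw [Int.emod_def]
    linear_combination hab
  refine ⟨_, a % q, ?_, Int.emod_lt_of_pos a (by omega), hbezout⟩
  refine (Int.emod_nonneg a (by omega)).lt_of_ne fun hs => ?_
  rw [← hs, mul_zero, zero_sub, neg_mul_eq_neg_mul] at hbezout
  have := Int.le_of_dvd one_pos ⟨_, hbezout.symm.trans (mul_comm _ _)⟩
  omega

theorem exists_fareyGraph_adj_den_lt {x : ℚ} (hx : 1 < x.den) :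
    ∃ y : ℚ, fareyGraph.Adj (some x) (some y) ∧ y.den < x.den := by
  have hx_cop : IsCoprime x.num x.den := Int.isCoprime_iff_gcd_eq_one.mpr x.reduced
  obtain ⟨r, s, hs, hsx, hrs⟩ :=
    Int.exists_mul_sub_mul_eq_one_of_isCoprime hx_cop (by exact_mod_cast hx)
  have hrs_cop : Nat.Coprime r.natAbs s.natAbs :=
    Int.isCoprime_iff_gcd_eq_one.mp ⟨-x.den, x.num, by linear_combination hrs⟩
  have hnum : (r / s : ℚ).num = r := Rat.num_div_eq_of_coprime hs hrs_cop
  have hden : ((r / s : ℚ).den : ℤ) = s := Rat.den_div_eq_of_coprime hs hrs_cop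
  refine ⟨r / s, ?_, by omega⟩
  change |x.num * _ - _ * _| = 1
  rw [hnum, hden, hrs, abs_one]

theorem fareyGraph_reachable_none (x : ℚ) : fareyGraph.Reachable (some x) none := by
  induction hn : x.den using Nat.strong_induction_on generalizing x with
  | _ n ih =>
    rcases (Nat.one_le_iff_ne_zero.2 x.den_nz).eq_or_lt with h | h
    · exact Adj.reachable (show fareyAdj (some x) none from h.symm)
    · obtain ⟨y, hxy, hy⟩ := exists_fareyGraph_adj_den_lt h
      exact hxy.reachable.trans (ih _ (hn ▸ hy) y rfl)

/-- The Farey graph `𝔽` is connected. -/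
theorem fareyGraph_connected : fareyGraph.Connected :=
  (connected_iff_exists_forall_reachable _).2 ⟨none, fun
    | none => .rfl
    | some x => (fareyGraph_reachable_none x).symm⟩
end

section
/- Every clique of the Farey graph 𝔽 has at most 3 vertices; that is, there is no set of four pairwise adjacent vertices in 𝔽. -/
/-!
Send a vertex `p/q` to its primitive vector `(p, q)` (and `∞` to `(1, 0)`) and reduce mod 2.
The vector is primitive, so its reduction is one of the three nonzero vectors of `(ZMod 2)²`;
adjacent vertices span a unimodular matrix, whose determinant is odd, so their reductions
differ. This is a proper 3-colouring of `𝔽`, which bounds every clique by 3.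
-/

lemma Int.cast_pair_ne_zero_of_isCoprime {R : Type*} [CommRing R] [Nontrivial R] {a b : ℤ}
    (h : IsCoprime a b) : ((a : R), (b : R)) ≠ 0 := by
  intro hab
  obtain ⟨ha, hb⟩ := Prod.mk_eq_zero.mp hab
  have hcop : IsCoprime (a : R) (b : R) := h.intCast
  rw [ha, hb] at hcop
  exact not_isCoprime_zero_zero hcop

lemma Int.cast_pair_ne_of_abs_det_eq_one {R : Type*} [CommRing R] [Nontrivial R] {a b c d : ℤ}
    (h : |a * d - c * b| = 1) : ((a : R), (b : R)) ≠ ((c : R), (d : R)) := by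
  intro heq
  obtain ⟨hac, hbd⟩ := Prod.mk.inj heq
  have hunit : IsUnit ((a * d - c * b : ℤ) : R) :=
    (Int.isUnit_iff_abs_eq.mpr h).map (Int.castRingHom R)
  apply hunit.ne_zero
  push_cast
  rw [hac, hbd, mul_comm, sub_self]

def fareyVec : Option ℚ → ℤ × ℤ
  | none => (1, 0)
  | some x => (x.num, x.den)

lemma isCoprime_fareyVec : ∀ v, IsCoprime (fareyVec v).1 (fareyVec v).2
  | none => isCoprime_one_left
  | some x => x.isCoprime_num_den

lemma abs_det_fareyVec_of_adj {v w : Option ℚ} (h : fareyGraph.Adj v w) :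
    |(fareyVec v).1 * (fareyVec w).2 - (fareyVec w).1 * (fareyVec v).2| = 1 := by
  match v, w, h with
  | some _, some _, h => exact h
  | none, some x, (h : x.den = 1) => simp [fareyVec, h]
  | some x, none, (h : x.den = 1) => simp [fareyVec, h]

def fareyColoringMod2 : fareyGraph.Coloring {u : ZMod 2 × ZMod 2 // u ≠ 0} :=
  SimpleGraph.Coloring.mk
    (fun v ↦ ⟨_, Int.cast_pair_ne_zero_of_isCoprime (isCoprime_fareyVec v)⟩)
    (fun h heq ↦ Int.cast_pair_ne_of_abs_det_eq_one (abs_det_fareyVec_of_adj h)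
      (congrArg Subtype.val heq))

/-- Every clique of the Farey graph `𝔽` has at most 3 vertices: there is no set of
four pairwise adjacent vertices in `𝔽`. -/
theorem fareyGraph_clique_le_three (s : Finset (Option ℚ))
    (h : fareyGraph.IsClique (s : Set (Option ℚ))) : s.card ≤ 3 :=
  calc s.card ≤ Fintype.card {u : ZMod 2 × ZMod 2 // u ≠ 0} :=
        h.card_le_of_coloring fareyColoringMod2
    _ = 3 := rfl
end

section
/- The Farey dual graph 𝔽* is 3-regular: every vertex of 𝔽* (i.e. every triangle of the Farey graph 𝔽) is adjacent in 𝔽* to exactly three other triangles. -/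
/-- A triangle of the Farey graph: a 3-element clique. -/
def FareyTriangle : Type := {s : Finset (Option ℚ) // fareyGraph.IsNClique 3 s}

/-- The Farey dual graph `𝔽*`: vertices are the triangles of the Farey graph, two
triangles being adjacent iff they are distinct and share exactly two vertices. -/
def fareyDual : SimpleGraph FareyTriangle where
  Adj T T' := T ≠ T' ∧ (T.1 ∩ T'.1).card = 2
  symm := by
    constructor
    rintro T T' ⟨h1, h2⟩
    exact ⟨h1.symm, by rwa [Finset.inter_comm]⟩
  loopless := ⟨fun T h => h.1 rfl⟩

/-!
Encode the vertex `p / q` (in lowest terms) by the primitive vector `(p, q) ∈ ℤ²` and `∞` by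
`(1, 0)`; a primitive vector and its negative give the same vertex, and Farey adjacency becomes
`|det| = 1`. If `u, v` are adjacent, Cramer's rule in the unimodular basis `u, v` shows that their
common neighbours are exactly `u + v` and `u - v`, so every Farey edge lies in exactly two
triangles. In any graph with this property, the triangles sharing an edge with a triangle `T`
correspond to the three edges of `T`: the shared edge determines the other triangle.
-/

theorem Set.eq_of_ne_of_ncard_eq_two {α : Type*} {s : Set α} (hs : s.ncard = 2) {a b c : α}
    (ha : a ∈ s) (hb : b ∈ s) (hc : c ∈ s) (hac : a ≠ c) (hbc : b ≠ c) : a = b := by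
  obtain ⟨x, y, -, rfl⟩ := Set.ncard_eq_two.mp hs
  simp only [Set.mem_insert_iff, Set.mem_singleton_iff] at ha hb hc
  grind

theorem Int.isCoprime_of_abs_mul_sub_mul_eq_one {a b x y : ℤ} (h : |a * y - x * b| = 1) :
    IsCoprime x y := by
  rcases (abs_eq zero_le_one).mp h with h | h
  · exact ⟨-b, a, by linarith⟩
  · exact ⟨b, -a, by linarith⟩

namespace SimpleGraph

variable {V : Type*} [DecidableEq V] {G : SimpleGraph V}

theorem isNClique_three_insert_pair_iff {x y w : V} :
    G.IsNClique 3 (insert w {x, y}) ↔ G.Adj x y ∧ w ∈ G.commonNeighbors x y := by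
  rw [is3Clique_triple_iff, mem_commonNeighbors, G.adj_comm x w, G.adj_comm y w]
  tauto

theorem IsNClique.exists_eq_insert_pair {t : Finset V} (ht : G.IsNClique 3 t)
    {x y : V} (hxy : x ≠ y) (hsub : {x, y} ⊆ t) :
    ∃ w ∉ ({x, y} : Finset V), w ∈ G.commonNeighbors x y ∧ t = insert w {x, y} := by
  obtain ⟨w, hw, rfl⟩ :=
    Finset.exists_eq_insert_iff.mpr ⟨hsub, by rw [Finset.card_pair hxy, ht.card_eq]⟩
  exact ⟨w, hw, (isNClique_three_insert_pair_iff.mp ht).2, rfl⟩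

theorem IsNClique.eq_of_inter_eq (hG : ∀ x y, G.Adj x y → (G.commonNeighbors x y).ncard = 2)
    {s t₁ t₂ : Finset V} (hs : G.IsNClique 3 s) (ht₁ : G.IsNClique 3 t₁)
    (ht₂ : G.IsNClique 3 t₂) (hcard : (s ∩ t₁).card = 2)
    (he : s ∩ t₁ = s ∩ t₂) : t₁ = t₂ := by
  obtain ⟨x, y, hxy, hexy⟩ := Finset.card_eq_two.mp hcard
  obtain ⟨z, hz, hzxy, rfl⟩ := hs.exists_eq_insert_pair hxy (hexy ▸ Finset.inter_subset_left)
  have apex (t : Finset V) (ht : G.IsNClique 3 t) (hst : insert z {x, y} ∩ t = {x, y}) :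
      ∃ w ∈ G.commonNeighbors x y, w ≠ z ∧ t = insert w {x, y} := by
    obtain ⟨w, -, hw, rfl⟩ := ht.exists_eq_insert_pair hxy (hst ▸ Finset.inter_subset_right)
    refine ⟨w, hw, ?_, rfl⟩
    rintro rfl
    exact hz (hst ▸ Finset.mem_inter.mpr ⟨by simp, by simp⟩)
  obtain ⟨w₁, hw₁, hw₁z, rfl⟩ := apex t₁ ht₁ hexy
  obtain ⟨w₂, hw₂, hw₂z, rfl⟩ := apex t₂ ht₂ (he ▸ hexy)
  obtain rfl := Set.eq_of_ne_of_ncard_eq_two (hG x y (isNClique_three_insert_pair_iff.mp hs).1)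
    hw₁ hw₂ hzxy hw₁z hw₂z
  rfl

theorem IsNClique.exists_inter_eq (hG : ∀ x y, G.Adj x y → (G.commonNeighbors x y).ncard = 2)
    {s e : Finset V} (hs : G.IsNClique 3 s) (he : e ⊆ s) (hcard : e.card = 2) :
    ∃ t, G.IsNClique 3 t ∧ s ∩ t = e := by
  obtain ⟨x, y, hxy, rfl⟩ := Finset.card_eq_two.mp hcard
  obtain ⟨z, -, hzxy, rfl⟩ := hs.exists_eq_insert_pair hxy he
  have hadj := (isNClique_three_insert_pair_iff.mp hs).1
  obtain ⟨w, hw, hwz⟩ := Set.exists_ne_of_one_lt_ncard (by rw [hG x y hadj]; norm_num) z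
  have hws : w ∉ (insert z {x, y} : Finset V) := by
    have := G.ne_of_adj (G.mem_commonNeighbors.mp hw).1
    have := G.ne_of_adj (G.mem_commonNeighbors.mp hw).2
    grind
  refine ⟨insert w {x, y}, isNClique_three_insert_pair_iff.mpr ⟨hadj, hw⟩, ?_⟩
  rw [Finset.inter_insert_of_notMem hws, Finset.inter_eq_right.mpr he]

theorem ncard_triangles_sharing_edge_eq_three
    (hG : ∀ x y, G.Adj x y → (G.commonNeighbors x y).ncard = 2)
    (T : {t : Finset V // G.IsNClique 3 t}) :
    {T' : {t : Finset V // G.IsNClique 3 t} | T ≠ T' ∧ (T.1 ∩ T'.1).card = 2}.ncard = 3 := by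
  obtain ⟨s, hs⟩ := T
  calc _ = (s.powersetCard 2 : Set (Finset V)).ncard := by
        refine Set.ncard_congr (fun T' _ ↦ s ∩ T'.1) ?_ ?_ ?_
        · rintro T' ⟨-, hcard⟩
          exact Finset.mem_powersetCard.mpr ⟨Finset.inter_subset_left, hcard⟩
        · rintro ⟨t₁, ht₁⟩ ⟨t₂, ht₂⟩ ⟨-, hcard⟩ - he
          exact Subtype.ext (hs.eq_of_inter_eq hG ht₁ ht₂ hcard he)
        · intro e he
          obtain ⟨hsub, hcard⟩ := Finset.mem_powersetCard.mp he
          obtain ⟨t, ht, hst⟩ := hs.exists_inter_eq hG hsub hcard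
          refine ⟨⟨t, ht⟩, ⟨fun h ↦ ?_, hst ▸ hcard⟩, hst⟩
          cases h
          rw [Finset.inter_self] at hst
          have := hst ▸ hs.card_eq
          omega
    _ = 3 := by rw [Set.ncard_coe_finset, Finset.card_powersetCard, hs.card_eq]; rfl

end SimpleGraph

namespace Farey

def num : Option ℚ → ℤ
  | none => 1
  | some x => x.num

def den : Option ℚ → ℤ
  | none => 0
  | some x => x.den

def ofVec (x y : ℤ) : Option ℚ := if y = 0 then none else some (x / y)

theorem adj_iff {u v : Option ℚ} :
    fareyGraph.Adj u v ↔ |num u * den v - num v * den u| = 1 := by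
  rcases u with _ | x <;> rcases v with _ | y <;> simp [fareyGraph, fareyAdj, num, den]

theorem ofVec_num_den (v : Option ℚ) : ofVec (num v) (den v) = v := by
  rcases v with _ | x <;> simp [ofVec, num, den, Rat.num_div_den]

theorem ofVec_neg (x y : ℤ) : ofVec (-x) (-y) = ofVec x y := by
  simp [ofVec, neg_div_neg_eq]

theorem num_den_ofVec {x y : ℤ} (h : IsCoprime x y) :
    (num (ofVec x y) = x ∧ den (ofVec x y) = y) ∨
      (num (ofVec x y) = -x ∧ den (ofVec x y) = -y) := by
  have pos {x y : ℤ} (h : IsCoprime x y) (hy : 0 < y) :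
      num (ofVec x y) = x ∧ den (ofVec x y) = y := by
    have hcop : Nat.Coprime x.natAbs y.natAbs := Int.isCoprime_iff_gcd_eq_one.mp h
    simp only [ofVec, hy.ne', if_false, num, den]
    exact ⟨Rat.num_div_eq_of_coprime hy hcop, Rat.den_div_eq_of_coprime hy hcop⟩
  rcases lt_trichotomy y 0 with hy | rfl | hy
  · right
    rw [← ofVec_neg]
    exact pos h.neg_neg (by omega)
  · rcases Int.isUnit_iff.mp (isCoprime_zero_right.mp h) with rfl | rfl <;> simp [ofVec, num, den]
  · exact .inl (pos h hy)

theorem adj_ofVec {u : Option ℚ} {x y : ℤ} (h : |num u * y - x * den u| = 1) :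
    fareyGraph.Adj u (ofVec x y) := by
  rw [adj_iff]
  rcases num_den_ofVec (Int.isCoprime_of_abs_mul_sub_mul_eq_one h) with ⟨hx, hy⟩ | ⟨hx, hy⟩ <;>
    rw [hx, hy]
  · exact h
  · rw [← h, ← abs_neg]; ring_nf

theorem ofVec_eq_or_eq_of_abs_det_eq_one {p q r s X Y : ℤ} (hD : |p * s - r * q| = 1)
    (hA : |p * Y - X * q| = 1) (hB : |r * Y - X * s| = 1) :
    ofVec X Y = ofVec (p + r) (q + s) ∨ ofVec X Y = ofVec (p - r) (q - s) := by
  -- Cramer's rule for `(X, Y)` in the basis `(p, q), (r, s)`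
  have hX : X * (p * s - r * q) = r * (p * Y - X * q) - p * (r * Y - X * s) := by ring
  have hY : Y * (p * s - r * q) = s * (p * Y - X * q) - q * (r * Y - X * s) := by ring
  have : ((X = p + r ∧ Y = q + s) ∨ (X = -(p + r) ∧ Y = -(q + s))) ∨
      ((X = p - r ∧ Y = q - s) ∨ (X = -(p - r) ∧ Y = -(q - s))) := by
    rcases (abs_eq zero_le_one).mp hD with h₁ | h₁ <;>
      rcases (abs_eq zero_le_one).mp hA with h₂ | h₂ <;>
      rcases (abs_eq zero_le_one).mp hB with h₃ | h₃ <;>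
      rw [h₁, h₂, h₃] at hX hY <;> omega
  rcases this with (⟨rfl, rfl⟩ | ⟨rfl, rfl⟩) | (⟨rfl, rfl⟩ | ⟨rfl, rfl⟩) <;>
    simp only [ofVec_neg, true_or, or_true]

theorem commonNeighbors_eq {u v : Option ℚ} (h : fareyGraph.Adj u v) :
    fareyGraph.commonNeighbors u v =
      {ofVec (num u + num v) (den u + den v), ofVec (num u - num v) (den u - den v)} := by
  have hD := adj_iff.mp h
  ext w
  rw [SimpleGraph.mem_commonNeighbors]
  constructor
  · rintro ⟨hu, hv⟩
    rw [← ofVec_num_den w]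
    exact ofVec_eq_or_eq_of_abs_det_eq_one hD (adj_iff.mp hu) (adj_iff.mp hv)
  · rintro (rfl | rfl)
    · refine ⟨adj_ofVec ?_, adj_ofVec ?_⟩
      · rw [← hD]; congr 1; ring
      · rw [← hD, ← abs_neg]; congr 1; ring
    · refine ⟨adj_ofVec ?_, adj_ofVec ?_⟩
      · rw [← hD, ← abs_neg]; congr 1; ring
      · rw [← hD, ← abs_neg]; congr 1; ring

theorem ofVec_add_ne_ofVec_sub {p q r s : ℤ} (hD : |p * s - r * q| = 1) :
    ofVec (p + r) (q + s) ≠ ofVec (p - r) (q - s) := by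
  intro he
  have h₁ : IsCoprime (p + r) (q + s) :=
    Int.isCoprime_of_abs_mul_sub_mul_eq_one (a := p) (b := q) (by rw [← hD]; congr 1; ring)
  have h₂ : IsCoprime (p - r) (q - s) :=
    Int.isCoprime_of_abs_mul_sub_mul_eq_one (a := p) (b := q)
      (by rw [← hD, ← abs_neg]; congr 1; ring)
  have : (r = 0 ∧ s = 0) ∨ (p = 0 ∧ q = 0) := by
    rcases num_den_ofVec h₁ with ⟨h₃, h₄⟩ | ⟨h₃, h₄⟩ <;>
      rcases num_den_ofVec h₂ with ⟨h₅, h₆⟩ | ⟨h₅, h₆⟩ <;>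
      rw [he] at h₃ h₄ <;> omega
  rcases this with ⟨rfl, rfl⟩ | ⟨rfl, rfl⟩ <;> simp at hD

theorem ncard_commonNeighbors {u v : Option ℚ} (h : fareyGraph.Adj u v) :
    (fareyGraph.commonNeighbors u v).ncard = 2 := by
  rw [commonNeighbors_eq h]
  exact Set.ncard_pair (ofVec_add_ne_ofVec_sub (adj_iff.mp h))

end Farey

/-- The Farey dual graph `𝔽*` is 3-regular: every triangle of the Farey graph is
adjacent in `𝔽*` to exactly three other triangles. -/
theorem fareyDual_three_regular (T : FareyTriangle) :
    (fareyDual.neighborSet T).ncard = 3 :=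
  SimpleGraph.ncard_triangles_sharing_edge_eq_three (fun _ _ ↦ Farey.ncard_commonNeighbors) T
end

section
/- The Farey dual graph 𝔽* is a tree: it is connected and contains no cycles. -/
/-!
Send a vertex of `𝔽` to its primitive vector `(num, den)` (with `∞ ↦ (1, 0)`): two vertices are
adjacent iff their vectors have determinant `±1`, and the common neighbours of adjacent `a`, `b`
are the two vertices with vectors `±(a + b)` and `±(a - b)`. Weight a triangle by the sum of
`Q (p, q) = p² - pq + q²` over its vertices. By the parallelogram law, the triangle across the edge
opposite a vertex `c` of `T` has weight `3 W(T) - 4 Q(c)`; as `Q > 0`, at most one neighbour of `T`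
is not heavier than `T`, so no cycle can pass through its heaviest triangle. If no neighbour is
lighter, then `2 Q(c) ≤ W(T)` at each vertex, which together with the identity
`2 (Q_a Q_b + Q_b Q_c + Q_c Q_a) = Q_a² + Q_b² + Q_c² + 3` forces `Q = 1` everywhere, i.e.
`T = {∞, 0, 1}`; descending the weight connects every triangle to this one.
-/

namespace Finset

lemma exists_eq_insert_pair {α : Type*} [DecidableEq α] {t : Finset α} {a b : α}
    (ht : t.card = 3) (ha : a ∈ t) (hb : b ∈ t) (hab : a ≠ b) :
    ∃ d, d ≠ a ∧ d ≠ b ∧ t = {d, a, b} := by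
  have hsub : {a, b} ⊆ t := insert_subset ha (singleton_subset_iff.mpr hb)
  obtain ⟨d, hd⟩ := card_eq_one.mp <| by
    rw [card_sdiff_of_subset hsub, ht, card_pair hab]
  have hdt : d ∈ t \ {a, b} := hd ▸ mem_singleton_self d
  simp only [mem_sdiff, mem_insert, mem_singleton, not_or] at hdt
  refine ⟨d, hdt.2.1, hdt.2.2, ?_⟩
  rw [← union_sdiff_of_subset hsub, hd]
  ext
  simp only [mem_union, mem_insert, mem_singleton]
  tauto

end Finset

namespace SimpleGraph

variable {V α : Type*} [LinearOrder α] {G : SimpleGraph V}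

theorem isAcyclic_of_forall_adj_le_eq (f : V → α)
    (h : ∀ ⦃v w w'⦄, G.Adj v w → G.Adj v w' → f w ≤ f v → f w' ≤ f v → w = w') :
    G.IsAcyclic := by
  classical
  intro v c hc
  obtain ⟨x, hx, hmax⟩ := c.support.toFinset.exists_max_image f ⟨v, by simp⟩
  rw [List.mem_toFinset] at hx
  have hc' := hc.rotate hx
  have hle : ∀ y ∈ (c.rotate x hx).support, f y ≤ f x := fun y hy =>
    hmax y (by simpa using hy)
  have hnil : ¬ (c.rotate x hx).Nil := hc'.not_nil
  exact hc'.snd_ne_penultimate <| h (Walk.adj_snd hnil) (Walk.adj_penultimate hnil).symm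
    (hle _ (Walk.getVert_mem_support _ _)) (hle _ (Walk.getVert_mem_support _ _))

theorem connected_of_forall_exists_adj_lt [WellFoundedLT α] (f : V → α) (r : V)
    (h : ∀ v ≠ r, ∃ w, G.Adj v w ∧ f w < f v) : G.Connected := by
  suffices hr : ∀ v, G.Reachable r v from (connected_iff_exists_forall_reachable G).2 ⟨r, hr⟩
  intro v
  induction hv : f v using WellFoundedLT.induction generalizing v with
  | _ a ih =>
    obtain rfl | hvr := eq_or_ne v r
    · rfl
    obtain ⟨w, hvw, hwv⟩ := h v hvr
    exact (ih _ (hv ▸ hwv) w rfl).trans hvw.symm.reachable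

end SimpleGraph

namespace Farey

def vec : Option ℚ → ℤ × ℤ
  | none => (1, 0)
  | some x => (x.num, x.den)

def cross (u v : ℤ × ℤ) : ℤ := u.1 * v.2 - u.2 * v.1

/-- `eisNorm (p, q) = |p - q ω|²` for `ω = e^{iπ/3}`, the centre of the ideal triangle
`{∞, 0, 1}`. -/
def eisNorm (u : ℤ × ℤ) : ℕ := (u.1 ^ 2 - u.1 * u.2 + u.2 ^ 2).toNat

lemma eisNorm_cast (u : ℤ × ℤ) : (eisNorm u : ℤ) = u.1 ^ 2 - u.1 * u.2 + u.2 ^ 2 :=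
  Int.toNat_of_nonneg (by nlinarith [sq_nonneg (u.1 - u.2)])

lemma eisNorm_pos {u : ℤ × ℤ} (hu : u ≠ 0) : 0 < eisNorm u := by
  have h : u.1 ≠ 0 ∨ u.2 ≠ 0 := by
    by_contra! h
    exact hu (Prod.ext h.1 h.2)
  zify
  rw [eisNorm_cast]
  rcases h with h | h
  · nlinarith [sq_nonneg (u.1 - 2 * u.2), sq_pos_of_ne_zero h]
  · nlinarith [sq_nonneg (2 * u.1 - u.2), sq_pos_of_ne_zero h]

lemma eisNorm_smul (e : ℤ) (u : ℤ × ℤ) : eisNorm (e • u) = e.natAbs ^ 2 * eisNorm u := by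
  zify
  simp only [eisNorm_cast, Prod.smul_fst, Prod.smul_snd, smul_eq_mul, sq_abs]
  ring

lemma eisNorm_add_add_eisNorm_sub (u v : ℤ × ℤ) :
    eisNorm (u + v) + eisNorm (u - v) = 2 * (eisNorm u + eisNorm v) := by
  zify
  simp only [eisNorm_cast, Prod.fst_add, Prod.snd_add, Prod.fst_sub, Prod.snd_sub]
  ring

lemma vec_injective : Function.Injective vec := by
  rintro (_ | x) (_ | y) h <;> simp only [vec, Prod.mk.injEq] at h
  · rfl
  · exact absurd h.2.symm (by exact_mod_cast y.den_nz)
  · exact absurd h.2 (by exact_mod_cast x.den_nz)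
  · exact congrArg some (Rat.ext h.1 (by exact_mod_cast h.2))

lemma vec_ne_neg (x y : Option ℚ) : vec x ≠ -vec y := by
  rcases x with _ | x <;> rcases y with _ | y <;> simp [vec, Prod.ext_iff]

lemma vec_ne_zero (x : Option ℚ) : vec x ≠ 0 := fun h =>
  vec_ne_neg x x (by rw [h, neg_zero])

lemma eq_of_vec_eq_or_neg {x y : Option ℚ} (h : vec x = vec y ∨ vec x = -vec y) : x = y :=
  h.elim (fun h => vec_injective h) (fun h => absurd h (vec_ne_neg x y))

lemma adj_iff_abs_cross {x y : Option ℚ} :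
    fareyGraph.Adj x y ↔ |cross (vec x) (vec y)| = 1 := by
  rcases x with _ | x <;> rcases y with _ | y <;>
    simp [fareyGraph, fareyAdj, vec, cross, mul_comm]

lemma isCoprime_of_abs_cross_eq_one {u v : ℤ × ℤ} (h : |cross u v| = 1) : IsCoprime u.1 u.2 := by
  rcases abs_eq zero_le_one |>.mp h with h | h
  · exact ⟨v.2, -v.1, by rw [cross] at h; linear_combination h⟩
  · exact ⟨-v.2, v.1, by rw [cross] at h; linear_combination -h⟩

lemma exists_vec_eq_or_neg {u : ℤ × ℤ} (hu : IsCoprime u.1 u.2) :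
    ∃ x, vec x = u ∨ vec x = -u := by
  wlog h : 0 ≤ u.2 generalizing u
  · obtain ⟨x, hx⟩ := this (u := -u) hu.neg_neg (by simp only [Prod.snd_neg]; omega)
    exact ⟨x, by rwa [neg_neg, or_comm] at hx⟩
  rcases h.eq_or_lt with h | h
  · rw [← h, isCoprime_zero_right, Int.isUnit_iff] at hu
    refine ⟨none, ?_⟩
    rcases hu with hu | hu
    · exact Or.inl (Prod.ext hu.symm h)
    · exact Or.inr (Prod.ext (by simp [vec, hu]) (by simp [vec, ← h]))
  · have hc : Nat.Coprime u.1.natAbs u.2.natAbs := Int.isCoprime_iff_gcd_eq_one.mp hu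
    refine ⟨some (u.1 / u.2), Or.inl (Prod.ext ?_ ?_)⟩
    · exact_mod_cast Rat.num_div_eq_of_coprime h hc
    · exact_mod_cast Rat.den_div_eq_of_coprime h hc

lemma cross_smul_eq (u v w : ℤ × ℤ) : cross u v • w = cross w v • u + cross u w • v := by
  ext <;> simp only [cross, Prod.smul_fst, Prod.smul_snd, Prod.fst_add, Prod.snd_add,
    smul_eq_mul] <;> ring

lemma abs_cross_comm (u v : ℤ × ℤ) : |cross u v| = |cross v u| := by
  rw [cross, cross, abs_sub_comm, mul_comm u.1, mul_comm u.2]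

lemma vec_of_common_neighbor {a b z : Option ℚ} (hab : fareyGraph.Adj a b)
    (haz : fareyGraph.Adj a z) (hbz : fareyGraph.Adj b z) :
    ∃ s e : ℤ, (s = 1 ∨ s = -1) ∧ (e = 1 ∨ e = -1) ∧ vec z = e • (vec a + s • vec b) := by
  rw [adj_iff_abs_cross] at hab haz hbz
  rw [abs_cross_comm] at hbz
  have key := cross_smul_eq (vec a) (vec b) (vec z)
  set d := cross (vec a) (vec b)
  set α := cross (vec z) (vec b)
  set β := cross (vec a) (vec z)
  have hd := abs_eq zero_le_one |>.mp hab
  have hα := abs_eq zero_le_one |>.mp hbz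
  have hβ := abs_eq zero_le_one |>.mp haz
  have hd2 : d * d = 1 := by rcases hd with h | h <;> simp [h]
  have hα2 : α * α = 1 := by rcases hα with h | h <;> simp [h]
  refine ⟨α * β, d * α, by rcases hα with h | h <;> rcases hβ with h' | h' <;> simp [h, h'],
    by rcases hd with h | h <;> rcases hα with h' | h' <;> simp [h, h'], ?_⟩
  have key1 := congrArg Prod.fst key
  have key2 := congrArg Prod.snd key
  simp only [Prod.smul_fst, Prod.smul_snd, Prod.fst_add, Prod.snd_add, smul_eq_mul] at key1 key2
  ext <;> simp only [Prod.smul_fst, Prod.smul_snd, Prod.fst_add, Prod.snd_add, smul_eq_mul]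
  · linear_combination (-(vec z).1) * hd2 + d * key1 - (d * β * (vec b).1) * hα2
  · linear_combination (-(vec z).2) * hd2 + d * key2 - (d * β * (vec b).2) * hα2

lemma eq_of_vec_eq_smul {z w : Option ℚ} {u : ℤ × ℤ} {e f : ℤ} (he : e = 1 ∨ e = -1)
    (hf : f = 1 ∨ f = -1) (hz : vec z = e • u) (hw : vec w = f • u) : z = w := by
  apply eq_of_vec_eq_or_neg
  rw [hz, hw]
  rcases he with rfl | rfl <;> rcases hf with rfl | rfl <;> simp

lemma eisNorm_add_eisNorm_of_common_neighbors {a b z w : Option ℚ} (hab : fareyGraph.Adj a b)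
    (haz : fareyGraph.Adj a z) (hbz : fareyGraph.Adj b z) (haw : fareyGraph.Adj a w)
    (hbw : fareyGraph.Adj b w) (hzw : z ≠ w) :
    eisNorm (vec z) + eisNorm (vec w) = 2 * (eisNorm (vec a) + eisNorm (vec b)) := by
  obtain ⟨s, e, hs, he, hz⟩ := vec_of_common_neighbor hab haz hbz
  obtain ⟨t, f, ht, hf, hw⟩ := vec_of_common_neighbor hab haw hbw
  have hst : s ≠ t := by
    rintro rfl
    exact hzw (eq_of_vec_eq_smul he hf hz hw)
  obtain rfl : t = -s := by omega
  have hs' : s.natAbs = 1 := Int.natAbs_eq_iff.mpr hs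
  have he' : e.natAbs = 1 := Int.natAbs_eq_iff.mpr he
  have hf' : f.natAbs = 1 := Int.natAbs_eq_iff.mpr hf
  rw [hz, hw, neg_smul, ← sub_eq_add_neg]
  rw [eisNorm_smul, eisNorm_smul, he', hf', one_pow, one_mul, one_mul,
    eisNorm_add_add_eisNorm_sub, eisNorm_smul, hs', one_pow, one_mul]

lemma eq_of_common_neighbors {a b z w w' : Option ℚ} (hab : fareyGraph.Adj a b)
    (haz : fareyGraph.Adj a z) (hbz : fareyGraph.Adj b z) (haw : fareyGraph.Adj a w)
    (hbw : fareyGraph.Adj b w) (haw' : fareyGraph.Adj a w') (hbw' : fareyGraph.Adj b w')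
    (hzw : z ≠ w) (hzw' : z ≠ w') : w = w' := by
  obtain ⟨s, e, hs, he, hz⟩ := vec_of_common_neighbor hab haz hbz
  obtain ⟨t, f, ht, hf, hw⟩ := vec_of_common_neighbor hab haw hbw
  obtain ⟨t', f', ht', hf', hw'⟩ := vec_of_common_neighbor hab haw' hbw'
  have hst : s ≠ t := by
    rintro rfl
    exact hzw (eq_of_vec_eq_smul he hf hz hw)
  have hst' : s ≠ t' := by
    rintro rfl
    exact hzw' (eq_of_vec_eq_smul he hf' hz hw')
  obtain rfl : t' = t := by omega
  exact eq_of_vec_eq_smul hf hf' hw hw'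

lemma cross_self (u : ℤ × ℤ) : cross u u = 0 := by
  rw [cross, mul_comm, sub_self]

lemma cross_smul_add_smul_sub (e f s : ℤ) (u v : ℤ × ℤ) :
    cross (e • (u + s • v)) (f • (u - s • v)) = -2 * e * f * s * cross u v := by
  simp only [cross, Prod.smul_fst, Prod.smul_snd, Prod.fst_add, Prod.snd_add, Prod.fst_sub,
    Prod.snd_sub, smul_eq_mul]
  ring

lemma exists_common_neighbor_ne {a b z : Option ℚ} (hab : fareyGraph.Adj a b)
    (haz : fareyGraph.Adj a z) (hbz : fareyGraph.Adj b z) :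
    ∃ w, fareyGraph.Adj a w ∧ fareyGraph.Adj b w ∧ w ≠ z := by
  obtain ⟨s, e, hs, he, hz⟩ := vec_of_common_neighbor hab haz hbz
  have hd := adj_iff_abs_cross.mp hab
  set u := vec a - s • vec b
  have hu : cross u (vec b) = cross (vec a) (vec b) := by
    simp only [u, cross, Prod.smul_fst, Prod.smul_snd, Prod.fst_sub, Prod.snd_sub, smul_eq_mul]
    ring
  obtain ⟨w, f, hf, hw⟩ : ∃ w, ∃ f : ℤ, (f = 1 ∨ f = -1) ∧ vec w = f • u := by
    obtain ⟨w, hw | hw⟩ := exists_vec_eq_or_neg (isCoprime_of_abs_cross_eq_one (hu ▸ hd))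
    · exact ⟨w, 1, Or.inl rfl, by rw [hw, one_smul]⟩
    · exact ⟨w, -1, Or.inr rfl, by rw [hw, neg_one_smul]⟩
  have hwa : cross (vec a) (vec w) = -(f * s) * cross (vec a) (vec b) := by
    simp only [hw, u, cross, Prod.smul_fst, Prod.smul_snd, Prod.fst_sub, Prod.snd_sub, smul_eq_mul]
    ring
  have hwb : cross (vec b) (vec w) = -f * cross (vec a) (vec b) := by
    simp only [hw, u, cross, Prod.smul_fst, Prod.smul_snd, Prod.fst_sub, Prod.snd_sub, smul_eq_mul]
    ring
  refine ⟨w, ?_, ?_, ?_⟩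
  · rw [adj_iff_abs_cross, hwa, abs_mul, hd, mul_one]
    rcases hf with rfl | rfl <;> rcases hs with rfl | rfl <;> simp
  · rw [adj_iff_abs_cross, hwb, abs_mul, hd, mul_one]
    rcases hf with rfl | rfl <;> simp
  · rintro rfl
    have h := cross_smul_add_smul_sub e f s (vec a) (vec b)
    rw [← hz, ← hw, cross_self] at h
    have hne : ∀ t : ℤ, (t = 1 ∨ t = -1) → t ≠ 0 := by rintro t (rfl | rfl) <;> norm_num
    simp [hne e he, hne f hf, hne s hs, abs_pos.mp (hd ▸ one_pos)] at h

lemma eisNorm_triangle {a b c : Option ℚ} (hab : fareyGraph.Adj a b)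
    (hac : fareyGraph.Adj a c) (hbc : fareyGraph.Adj b c) :
    2 * (eisNorm (vec a) * eisNorm (vec b) + eisNorm (vec b) * eisNorm (vec c) +
      eisNorm (vec c) * eisNorm (vec a)) =
      eisNorm (vec a) ^ 2 + eisNorm (vec b) ^ 2 + eisNorm (vec c) ^ 2 + 3 := by
  obtain ⟨s, e, hs, he, hc⟩ := vec_of_common_neighbor hab hac hbc
  have hd : cross (vec a) (vec b) ^ 2 = 1 := by
    rw [← sq_abs, adj_iff_abs_cross.mp hab, one_pow]
  zify
  simp only [eisNorm_cast, hc]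
  rw [cross] at hd
  rcases hs with rfl | rfl <;> rcases he with rfl | rfl <;>
    simp only [Prod.smul_fst, Prod.smul_snd, Prod.fst_add, Prod.snd_add, smul_eq_mul] <;>
    linear_combination 3 * hd

def weight (T : FareyTriangle) : ℕ := ∑ x ∈ T.1, eisNorm (vec x)

lemma exists_eq_insert_of_mem {T : FareyTriangle} {c : Option ℚ} (hc : c ∈ T.1) :
    ∃ a b, fareyGraph.Adj c a ∧ fareyGraph.Adj c b ∧ fareyGraph.Adj a b ∧ T.1 = {c, a, b} := by
  obtain ⟨a, b, hab, hE⟩ := Finset.card_eq_two.mp <| by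
    rw [Finset.card_erase_of_mem hc, T.2.card_eq]
  have ha : a ∈ T.1.erase c := hE ▸ by simp
  have hb : b ∈ T.1.erase c := hE ▸ by simp
  rw [Finset.mem_erase] at ha hb
  refine ⟨a, b, T.2.isClique hc ha.2 ha.1.symm, T.2.isClique hc hb.2 hb.1.symm,
    T.2.isClique ha.2 hb.2 hab, ?_⟩
  rw [← Finset.insert_erase hc, hE]

lemma weight_eq {T : FareyTriangle} {a b c : Option ℚ} (hT : T.1 = {c, a, b})
    (hca : c ≠ a) (hcb : c ≠ b) (hab : a ≠ b) :
    weight T = eisNorm (vec c) + eisNorm (vec a) + eisNorm (vec b) := by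
  rw [weight, hT, Finset.sum_insert (by simp [hca, hcb]), Finset.sum_pair hab, add_assoc]

lemma adj_and_notMem_iff {T T' : FareyTriangle} {a b c : Option ℚ} (hT : T.1 = {c, a, b})
    (hca : c ≠ a) (hcb : c ≠ b) (hab : fareyGraph.Adj a b) :
    fareyDual.Adj T T' ∧ c ∉ T'.1 ↔
      ∃ d, d ≠ c ∧ fareyGraph.Adj a d ∧ fareyGraph.Adj b d ∧ T'.1 = {d, a, b} := by
  constructor
  · rintro ⟨⟨-, hcard⟩, hc⟩
    have hinter : T.1 ∩ T'.1 = {a, b} := by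
      refine Finset.eq_of_subset_of_card_le ?_ (by rw [hcard, Finset.card_pair hab.ne])
      intro x hx
      obtain ⟨hxT, hxT'⟩ := Finset.mem_inter.mp hx
      rw [hT, Finset.mem_insert] at hxT
      exact hxT.resolve_left (by rintro rfl; exact hc hxT')
    have ha : a ∈ T'.1 := (Finset.mem_inter.mp (show a ∈ T.1 ∩ T'.1 by simp [hinter])).2
    have hb : b ∈ T'.1 := (Finset.mem_inter.mp (show b ∈ T.1 ∩ T'.1 by simp [hinter])).2
    obtain ⟨d, hda, hdb, hT'⟩ := Finset.exists_eq_insert_pair T'.2.card_eq ha hb hab.ne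
    have hd : d ∈ T'.1 := by simp [hT']
    exact ⟨d, fun h => hc (h ▸ hd), T'.2.isClique ha hd hda.symm, T'.2.isClique hb hd hdb.symm,
      hT'⟩
  · rintro ⟨d, hdc, had, hbd, hT'⟩
    have hc : c ∉ T'.1 := by simp [hT', hdc.symm, hca, hcb]
    refine ⟨⟨fun h => hc (h ▸ by simp [hT]), ?_⟩, hc⟩
    have hinter : T.1 ∩ T'.1 = {a, b} := by
      rw [hT, hT']
      ext x
      simp only [Finset.mem_inter, Finset.mem_insert, Finset.mem_singleton]
      constructor
      · rintro ⟨rfl | h, rfl | h'⟩ <;> tauto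
      · tauto
    rw [hinter, Finset.card_pair hab.ne]

lemma exists_mem_notMem_of_adj {T T' : FareyTriangle} (h : fareyDual.Adj T T') :
    ∃ c ∈ T.1, c ∉ T'.1 := by
  by_contra! hsub
  exact h.1 <| Subtype.ext <|
    Finset.eq_of_subset_of_card_le hsub (by rw [T.2.card_eq, T'.2.card_eq])

lemma weight_add_four_mul_eisNorm {T T' : FareyTriangle} {c : Option ℚ} (h : fareyDual.Adj T T')
    (hc : c ∈ T.1) (hc' : c ∉ T'.1) : weight T' + 4 * eisNorm (vec c) = 3 * weight T := by
  obtain ⟨a, b, hca, hcb, hab, hT⟩ := exists_eq_insert_of_mem hc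
  obtain ⟨d, hdc, had, hbd, hT'⟩ := (adj_and_notMem_iff hT hca.ne hcb.ne hab).mp ⟨h, hc'⟩
  have hcd := eisNorm_add_eisNorm_of_common_neighbors hab hca.symm hcb.symm had hbd hdc.symm
  rw [weight_eq hT hca.ne hcb.ne hab.ne, weight_eq hT' had.ne.symm hbd.ne.symm hab.ne]
  omega

lemma eq_of_adj_of_notMem {T T₁ T₂ : FareyTriangle} {c : Option ℚ} (h₁ : fareyDual.Adj T T₁)
    (h₂ : fareyDual.Adj T T₂) (hc : c ∈ T.1) (hc₁ : c ∉ T₁.1) (hc₂ : c ∉ T₂.1) : T₁ = T₂ := by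
  obtain ⟨a, b, hca, hcb, hab, hT⟩ := exists_eq_insert_of_mem hc
  obtain ⟨d₁, hdc₁, had₁, hbd₁, hT₁⟩ := (adj_and_notMem_iff hT hca.ne hcb.ne hab).mp ⟨h₁, hc₁⟩
  obtain ⟨d₂, hdc₂, had₂, hbd₂, hT₂⟩ := (adj_and_notMem_iff hT hca.ne hcb.ne hab).mp ⟨h₂, hc₂⟩
  have := eq_of_common_neighbors hab hca.symm hcb.symm had₁ hbd₁ had₂ hbd₂ hdc₁.symm hdc₂.symm
  exact Subtype.ext (by rw [hT₁, hT₂, this])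

lemma exists_adj_notMem {T : FareyTriangle} {c : Option ℚ} (hc : c ∈ T.1) :
    ∃ T', fareyDual.Adj T T' ∧ c ∉ T'.1 := by
  obtain ⟨a, b, hca, hcb, hab, hT⟩ := exists_eq_insert_of_mem hc
  obtain ⟨d, had, hbd, hdc⟩ := exists_common_neighbor_ne hab hca.symm hcb.symm
  let T' : FareyTriangle :=
    ⟨{d, a, b}, SimpleGraph.is3Clique_triple_iff.mpr ⟨had.symm, hbd.symm, hab⟩⟩
  exact ⟨T', (adj_and_notMem_iff hT hca.ne hcb.ne hab).mpr ⟨d, hdc, had, hbd, rfl⟩⟩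

lemma one_le_eisNorm_vec (x : Option ℚ) : 1 ≤ eisNorm (vec x) :=
  eisNorm_pos (vec_ne_zero x)

theorem eq_of_adj_of_weight_le {T T₁ T₂ : FareyTriangle} (h₁ : fareyDual.Adj T T₁)
    (h₂ : fareyDual.Adj T T₂) (hw₁ : weight T₁ ≤ weight T) (hw₂ : weight T₂ ≤ weight T) :
    T₁ = T₂ := by
  obtain ⟨c₁, hc₁, hc₁'⟩ := exists_mem_notMem_of_adj h₁
  obtain ⟨c₂, hc₂, hc₂'⟩ := exists_mem_notMem_of_adj h₂
  obtain rfl | hne := eq_or_ne c₁ c₂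
  · exact eq_of_adj_of_notMem h₁ h₂ hc₁ hc₁' hc₂'
  exfalso
  obtain ⟨a, b, hc₁a, hc₁b, hab, hT⟩ := exists_eq_insert_of_mem hc₁
  have e₁ := weight_add_four_mul_eisNorm h₁ hc₁ hc₁'
  have e₂ := weight_add_four_mul_eisNorm h₂ hc₂ hc₂'
  have hw := weight_eq hT hc₁a.ne hc₁b.ne hab.ne
  have hc₂ab : c₂ = a ∨ c₂ = b := by simpa [hT, hne.symm] using hc₂
  have ha := one_le_eisNorm_vec a
  have hb := one_le_eisNorm_vec b
  rcases hc₂ab with rfl | rfl <;> omega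

/-- With `p = Y + Z - X`, `q = X + Z - Y`, `r = X + Y - Z` the identity reads `pq + qr + rp = 3`,
while `p + q = 2 Z ≥ 2` etc.; this leaves only `p = q = r = 1`. -/
lemma eq_one_of_two_mul_sum_mul_eq {X Y Z : ℕ} (hX : 1 ≤ X) (hY : 1 ≤ Y) (hZ : 1 ≤ Z)
    (hXYZ : X ≤ Y + Z) (hYXZ : Y ≤ X + Z) (hZXY : Z ≤ X + Y)
    (h : 2 * (X * Y + Y * Z + Z * X) = X ^ 2 + Y ^ 2 + Z ^ 2 + 3) :
    X = 1 ∧ Y = 1 ∧ Z = 1 :=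
  ⟨by nlinarith, by nlinarith, by nlinarith⟩

def root : FareyTriangle :=
  ⟨{none, some 0, some 1}, SimpleGraph.is3Clique_triple_iff.mpr
    ⟨by simp [adj_iff_abs_cross, vec, cross], by simp [adj_iff_abs_cross, vec, cross],
      by simp [adj_iff_abs_cross, vec, cross]⟩⟩

lemma mem_root_of_eisNorm_eq_one {x : Option ℚ} (hx : eisNorm (vec x) = 1) : x ∈ root.1 := by
  rcases x with _ | q
  · simp [root]
  have hq : q.num ^ 2 - q.num * q.den + (q.den : ℤ) ^ 2 = 1 := by
    have := eisNorm_cast (vec (some q))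
    rwa [hx, Nat.cast_one, eq_comm] at this
  have hden : (q.den : ℤ) = 1 := by
    have := q.den_pos
    nlinarith [sq_nonneg (2 * q.num - q.den)]
  have hnum : q.num = 0 ∨ q.num = 1 := by
    rw [hden] at hq
    have : q.num * (q.num - 1) = 0 := by linear_combination hq
    rcases mul_eq_zero.mp this with h | h
    · exact Or.inl h
    · exact Or.inr (by linarith)
  have hq' : q = 0 ∨ q = 1 := by
    have hnum' := Rat.coe_int_num_of_den_eq_one (q := q) (by exact_mod_cast hden)
    rcases hnum with h | h <;> rw [h] at hnum' <;> simp [← hnum']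
  rcases hq' with rfl | rfl <;> simp [root]

theorem exists_adj_weight_lt {T : FareyTriangle} (hT : T ≠ root) :
    ∃ T', fareyDual.Adj T T' ∧ weight T' < weight T := by
  by_contra! hle
  have h2 : ∀ c ∈ T.1, 2 * eisNorm (vec c) ≤ weight T := fun c hc => by
    obtain ⟨T', hTT', hc'⟩ := exists_adj_notMem hc
    have := weight_add_four_mul_eisNorm hTT' hc hc'
    have := hle T' hTT'
    omega
  obtain ⟨c, hc⟩ := Finset.card_pos.mp (by rw [T.2.card_eq]; norm_num)
  obtain ⟨a, b, hca, hcb, hab, hT'⟩ := exists_eq_insert_of_mem hc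
  have hw := weight_eq hT' hca.ne hcb.ne hab.ne
  have hc2 := h2 c hc
  have ha2 := h2 a (by simp [hT'])
  have hb2 := h2 b (by simp [hT'])
  obtain ⟨h1c, h1a, h1b⟩ := eq_one_of_two_mul_sum_mul_eq (one_le_eisNorm_vec c)
    (one_le_eisNorm_vec a) (one_le_eisNorm_vec b) (by omega) (by omega) (by omega)
    (eisNorm_triangle hca hcb hab)
  refine hT <| Subtype.ext <|
    Finset.eq_of_subset_of_card_le ?_ (by rw [T.2.card_eq, root.2.card_eq])
  rw [hT', Finset.insert_subset_iff, Finset.insert_subset_iff, Finset.singleton_subset_iff]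
  exact ⟨mem_root_of_eisNorm_eq_one h1c, mem_root_of_eisNorm_eq_one h1a,
    mem_root_of_eisNorm_eq_one h1b⟩

end Farey

/-- The Farey dual graph `𝔽*` is a tree: it is connected and acyclic. -/
theorem fareyDual_isTree : fareyDual.IsTree :=
  ⟨SimpleGraph.connected_of_forall_exists_adj_lt Farey.weight Farey.root
      fun _ hT => Farey.exists_adj_weight_lt hT,
    SimpleGraph.isAcyclic_of_forall_adj_le_eq Farey.weight
      fun _ _ _ h₁ h₂ hw₁ hw₂ => Farey.eq_of_adj_of_weight_le h₁ h₂ hw₁ hw₂⟩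
end

section
/- In the model graph G, for every Farey vertex x the edge joining x̃ to x is contained in no triangle of G; that is, x and x̃ have no common neighbour in G. -/
/-- Vertices of the model graph: Farey vertices `.inl x`, dual vertices
`.inr (.inl x)` (written `x̃`), and triangle-vertices `.inr (.inr T)`. -/
abbrev ModelVertex : Type := Option ℚ ⊕ (Option ℚ ⊕ FareyTriangle)

/-- Adjacency relation of the model graph `G`. -/
def modelAdj : ModelVertex → ModelVertex → Prop
  | .inl x, .inl y => fareyGraph.Adj x y
  | .inl x, .inr (.inl y) => x = y
  | .inr (.inl x), .inl y => x = y
  | .inr (.inl x), .inr (.inr T) => x ∈ T.1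
  | .inr (.inr T), .inr (.inl x) => x ∈ T.1
  | .inr (.inr T), .inr (.inr T') => T ≠ T' ∧ (T.1 ∩ T'.1).card = 2
  | _, _ => False

/-- The model graph `G` of the pants graph of `N₃`: on `V(𝔽) ⊔ V(𝔽) ⊔ T(𝔽)`, with
edges `x—y` for `x, y` adjacent in `𝔽`, `x̃—x`, `x̃—T` whenever `x ∈ T`, and `T—T'`
whenever `T ≠ T'` and `|T ∩ T'| = 2`. -/
def modelGraph : SimpleGraph ModelVertex where
  Adj := modelAdj
  symm := by
    constructor
    rintro (x | x | T) (y | y | T') h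
    · exact fareyGraph.symm.symm _ _ h
    · exact h.symm
    · exact h.elim
    · exact h.symm
    · exact h.elim
    · exact h
    · exact h.elim
    · exact h
    · exact ⟨h.1.symm, by
        have := h.2
        rwa [Finset.inter_comm]⟩
  loopless := by
    constructor
    rintro (x | x | T) h
    · exact fareyGraph.loopless.irrefl x h
    · exact h.elim
    · exact h.1 rfl

/-- In the model graph `G`, for every Farey vertex `x`, the edge joining `x̃` to `x`
is contained in no triangle of `G`: `x` and `x̃` have no common neighbour. -/
theorem modelGraph_matching_edge_in_no_triangle (x : Option ℚ) (w : ModelVertex) :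
    ¬ (modelGraph.Adj (.inl x) w ∧ modelGraph.Adj (.inr (.inl x)) w) := by
  rintro ⟨hx, hx'⟩
  rcases w with y | y | T
  · obtain rfl : x = y := hx'
    exact fareyGraph.irrefl hx
  · exact hx'
  · exact hx
end
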